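/- arXiv:1509.08441 — 2 statements merged into one kernel-verified Lean document; each statement's English description precedes it below -/
import Mathlib

section
/- Let θ ∈ (π, 2π) be a real number, m₀ a positive integer, and δ a positive real with δ < min{θ/π − 1, 1 − θ/(2π)}. If min{ frac(m₀θ/π), 1 − frac(m₀θ/π) } < δ (where frac denotes the fractional part), then there exists an integer c with (2m₀ − 2)θ/(2π) < c < (2m₀ − 1)θ/(2π). -/
/-!
With `b = θ/π` and `x = m₀ θ/π` the interval is `(x - b, x - b/2)`. If `x` exceeds `⌊x⌋` by less
than `min (b - 1) (1 - b/2)`, the interval contains `⌊x⌋ - 1`; if `x` falls short of `⌊x⌋ + 1` by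
less than that, it contains `⌊x⌋`.
-/

lemma floor_sub_one_mem_Ioo_of_fract_lt {x b : ℝ} (h₁ : Int.fract x < b - 1)
    (h₂ : Int.fract x < 1 - b / 2) :
    ((⌊x⌋ - 1 : ℤ) : ℝ) ∈ Set.Ioo (x - b) (x - b / 2) := by
  have hx := Int.self_sub_fract x
  have := Int.fract_nonneg x
  push_cast
  constructor <;> linarith

lemma floor_mem_Ioo_of_one_sub_fract_lt {x b : ℝ} (h₁ : 1 - Int.fract x < b - 1)
    (h₂ : 1 - Int.fract x < 1 - b / 2) :
    ((⌊x⌋ : ℤ) : ℝ) ∈ Set.Ioo (x - b) (x - b / 2) := by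
  have hx := Int.self_sub_fract x
  have := Int.fract_lt_one x
  constructor <;> linarith

lemma exists_int_mem_Ioo_of_min_fract_lt {x b : ℝ}
    (h : min (Int.fract x) (1 - Int.fract x) < min (b - 1) (1 - b / 2)) :
    ∃ c : ℤ, (c : ℝ) ∈ Set.Ioo (x - b) (x - b / 2) := by
  obtain ⟨h₁, h₂⟩ := lt_min_iff.1 h
  rcases le_total (Int.fract x) (1 - Int.fract x) with hle | hle
  · rw [min_eq_left hle] at h₁ h₂
    exact ⟨_, floor_sub_one_mem_Ioo_of_fract_lt h₁ h₂⟩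
  · rw [min_eq_right hle] at h₁ h₂
    exact ⟨_, floor_mem_Ioo_of_one_sub_fract_lt h₁ h₂⟩

theorem stmt_0_general (θ : ℝ)
    (m₀ : ℕ) (δ : ℝ)
    (hδlt : δ < min (θ / Real.pi - 1) (1 - θ / (2 * Real.pi)))
    (hfrac : min (Int.fract ((m₀ : ℝ) * θ / Real.pi))
        (1 - Int.fract ((m₀ : ℝ) * θ / Real.pi)) < δ) :
    ∃ c : ℤ, (2 * (m₀ : ℝ) - 2) * θ / (2 * Real.pi) < (c : ℝ) ∧
      (c : ℝ) < (2 * (m₀ : ℝ) - 1) * θ / (2 * Real.pi) := by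
  have hhalf : θ / (2 * Real.pi) = θ / Real.pi / 2 := by ring
  have hlo : (2 * (m₀ : ℝ) - 2) * θ / (2 * Real.pi) = m₀ * θ / Real.pi - θ / Real.pi := by ring
  have hhi : (2 * (m₀ : ℝ) - 1) * θ / (2 * Real.pi) = m₀ * θ / Real.pi - θ / Real.pi / 2 := by
    ring
  rw [hhalf] at hδlt
  rw [hlo, hhi]
  exact exists_int_mem_Ioo_of_min_fract_lt (hfrac.trans hδlt)

/-- Key arithmetic lemma in the common index jump theorem application:
for θ ∈ (π, 2π), m₀ ≥ 1 and δ small enough, closeness of m₀θ/π to an integer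
forces an integer strictly between (2m₀−2)θ/(2π) and (2m₀−1)θ/(2π). -/
theorem stmt_0 (θ : ℝ) (hθ₁ : Real.pi < θ) (hθ₂ : θ < 2 * Real.pi)
    (m₀ : ℕ) (hm₀ : 1 ≤ m₀) (δ : ℝ) (hδ : 0 < δ)
    (hδlt : δ < min (θ / Real.pi - 1) (1 - θ / (2 * Real.pi)))
    (hfrac : min (Int.fract ((m₀ : ℝ) * θ / Real.pi))
        (1 - Int.fract ((m₀ : ℝ) * θ / Real.pi)) < δ) :
    ∃ c : ℤ, (2 * (m₀ : ℝ) - 2) * θ / (2 * Real.pi) < (c : ℝ) ∧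
      (c : ℝ) < (2 * (m₀ : ℝ) - 1) * θ / (2 * Real.pi) :=
  stmt_0_general θ m₀ δ hδlt hfrac
end

section
/- Let 𝔅 : S¹ → ℤ be a function (Bott's index function of a periodic orbit) and define μ(k) = Σ_{z ∈ S¹, z^k = 1} 𝔅(z) for k ∈ ℕ. If 𝔅 is Riemann integrable, then lim_{k→∞} μ(k)/k exists and equals (1/2π) ∫_{S¹} 𝔅(z) dz. -/
/-!
Up to the factor 1/2π, μ(k)/k is the left Riemann sum of 𝔅 on [0, 2π] with k equal subintervals,
i.e. the integral of the step function equal to 𝔅(2πj/k) on [2πj/k, 2π(j+1)/k). At every continuity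
point of 𝔅 these step functions converge to 𝔅 as the mesh goes to 0, so by dominated convergence
(𝔅 is bounded and continuous almost everywhere) their integrals converge to ∫ 𝔅.
-/

open Filter Topology MeasureTheory Set

section LeftStep

variable {E : Type*}

noncomputable def leftStep (f : ℝ → E) (a h x : ℝ) : E := f (a + h * ⌊(x - a) / h⌋)

theorem stronglyMeasurable_leftStep [TopologicalSpace E] (f : ℝ → E) (a h : ℝ) :
    StronglyMeasurable (leftStep f a h) :=
  (StronglyMeasurable.of_discrete (f := fun n : ℤ => f (a + h * n))).comp_measurable
    ((measurable_id.sub_const a).div_const h).floor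

theorem leftStep_eq_of_mem_Ico (f : ℝ → E) (a : ℝ) {h : ℝ} (hh : 0 < h) (j : ℤ) {x : ℝ}
    (hx : x ∈ Ico (a + h * j) (a + h * (j + 1))) : leftStep f a h x = f (a + h * j) := by
  have hj : ⌊(x - a) / h⌋ = j := by
    rw [Int.floor_eq_iff, le_div_iff₀ hh, div_lt_iff₀ hh]
    constructor <;> linarith [hx.1, hx.2]
  rw [leftStep, hj]

theorem tendsto_leftStep_nhdsGT_zero [TopologicalSpace E] (f : ℝ → E) (a : ℝ) {x : ℝ}
    (hf : ContinuousAt f x) :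
    Tendsto (fun h => leftStep f a h x) (𝓝[>] 0) (𝓝 (f x)) := by
  refine hf.tendsto.comp ?_
  have hlow : Tendsto (fun h : ℝ => x - h) (𝓝[>] 0) (𝓝 x) :=
    ((continuous_sub_left x).tendsto' 0 x (sub_zero x)).mono_left nhdsWithin_le_nhds
  refine tendsto_of_tendsto_of_tendsto_of_le_of_le' hlow tendsto_const_nhds ?_ ?_ <;>
    filter_upwards [self_mem_nhdsWithin] with h (hh : 0 < h)
  · have := Int.lt_floor_add_one ((x - a) / h)
    rw [div_lt_iff₀ hh] at this
    linarith
  · have := Int.floor_le ((x - a) / h)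
    rw [le_div_iff₀ hh] at this
    linarith

variable [NormedAddCommGroup E] [NormedSpace ℝ E] [CompleteSpace E]

theorem intervalIntegral_leftStep (f : ℝ → E) (a : ℝ) {h : ℝ} (hh : 0 < h) (k : ℕ) :
    ∫ x in a..a + h * k, leftStep f a h x = h • ∑ j ∈ Finset.range k, f (a + h * j) := by
  have hpiece : ∀ j : ℕ, EqOn (leftStep f a h) (fun _ => f (a + h * j))
      (uIoo (a + h * j) (a + h * (j + 1 : ℕ))) := by
    intro j x hx
    rw [uIoo_of_le (by push_cast; nlinarith)] at hx
    exact_mod_cast leftStep_eq_of_mem_Ico f a hh j (by exact_mod_cast Ioo_subset_Ico_self hx)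
  have hint : ∀ j < k, IntervalIntegrable (leftStep f a h) volume
      (a + h * j) (a + h * (j + 1 : ℕ)) :=
    fun j _ => intervalIntegrable_const.congr_uIoo (hpiece j).symm
  have hsum := intervalIntegral.sum_integral_adjacent_intervals hint
  rw [Nat.cast_zero, mul_zero, add_zero] at hsum
  rw [← hsum, Finset.smul_sum]
  refine Finset.sum_congr rfl fun j _ => ?_
  rw [intervalIntegral.integral_congr_uIoo (hpiece j), intervalIntegral.integral_const]
  congr 1
  push_cast
  ring

theorem tendsto_riemannSum_intervalIntegral (f : ℝ → E) {a b : ℝ} (hab : a < b) {C : ℝ}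
    (hC : ∀ x, ‖f x‖ ≤ C) (hf : ∀ᵐ x, ContinuousAt f x) :
    Tendsto (fun k : ℕ => ((b - a) / k) • ∑ j ∈ Finset.range k, f (a + (b - a) / k * j))
      atTop (𝓝 (∫ x in a..b, f x)) := by
  have hmesh : Tendsto (fun k : ℕ => (b - a) / k) atTop (𝓝[>] 0) :=
    tendsto_nhdsWithin_iff.2 ⟨tendsto_const_div_atTop_nhds_zero_nat _,
      (eventually_gt_atTop 0).mono fun k hk => div_pos (sub_pos.2 hab) (by exact_mod_cast hk)⟩
  have hstep : Tendsto (fun k : ℕ => ∫ x in a..b, leftStep f a ((b - a) / k) x) atTop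
      (𝓝 (∫ x in a..b, f x)) :=
    intervalIntegral.tendsto_integral_filter_of_dominated_convergence (fun _ => C)
      (.of_forall fun _ => (stronglyMeasurable_leftStep f a _).aestronglyMeasurable)
      (.of_forall fun _ => .of_forall fun _ _ => hC _) intervalIntegrable_const
      (hf.mono fun x hx _ => (tendsto_leftStep_nhdsGT_zero f a hx).comp hmesh)
  refine hstep.congr' ((eventually_gt_atTop 0).mono fun k hk => ?_)
  have hk : (0 : ℝ) < k := by exact_mod_cast hk
  have hsum := intervalIntegral_leftStep f a (div_pos (sub_pos.2 hab) hk) k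
  rwa [div_mul_cancel₀ _ hk.ne', add_sub_cancel] at hsum

end LeftStep

theorem stmt_7_general (B : ℝ → ℤ)
    (hbd : ∃ C : ℝ, ∀ θ : ℝ, |(B θ : ℝ)| ≤ C)
    (hae : ∀ᵐ θ : ℝ ∂MeasureTheory.volume, ContinuousAt (fun x => (B x : ℝ)) θ)
    (μ : ℕ → ℤ)
    (hμ : ∀ k : ℕ, μ k = ∑ j ∈ Finset.range k, B (2 * Real.pi * (j : ℝ) / (k : ℝ))) :
    Tendsto (fun k : ℕ => (μ k : ℝ) / (k : ℝ)) atTop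
      (𝓝 ((1 / (2 * Real.pi)) * ∫ θ in (0:ℝ)..(2 * Real.pi), (B θ : ℝ))) := by
  obtain ⟨C, hC⟩ := hbd
  have hRiemann := tendsto_riemannSum_intervalIntegral (fun θ => (B θ : ℝ)) Real.two_pi_pos
    (C := C) hC hae
  refine (hRiemann.const_mul (1 / (2 * Real.pi))).congr fun k => ?_
  rw [hμ k, smul_eq_mul, Int.cast_sum]
  simp only [zero_add, sub_zero]
  field_simp

/-- Bott's formula and the mean index: if 𝔅 : S¹ → ℤ (written as a 2π-periodic
function of the angle) is Riemann integrable (bounded and a.e. continuous), and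
μ(k) = Σ_{z^k = 1} 𝔅(z) is the sum of 𝔅 over the k-th roots of unity, then
μ(k)/k converges to (1/2π) ∫_{S¹} 𝔅. -/
theorem stmt_7 (B : ℝ → ℤ)
    (hper : Function.Periodic B (2 * Real.pi))
    (hbd : ∃ C : ℝ, ∀ θ : ℝ, |(B θ : ℝ)| ≤ C)
    (hae : ∀ᵐ θ : ℝ ∂MeasureTheory.volume, ContinuousAt (fun x => (B x : ℝ)) θ)
    (μ : ℕ → ℤ)
    (hμ : ∀ k : ℕ, μ k = ∑ j ∈ Finset.range k, B (2 * Real.pi * (j : ℝ) / (k : ℝ))) :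
    Tendsto (fun k : ℕ => (μ k : ℝ) / (k : ℝ)) atTop
      (𝓝 ((1 / (2 * Real.pi)) * ∫ θ in (0:ℝ)..(2 * Real.pi), (B θ : ℝ))) :=
  stmt_7_general B hbd hae μ hμ
end
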